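/- For every a > 0, b ∈ (0,1), and z ∈ (0,1), the regularized incomplete beta function satisfies I_z(a,b) ≤ z^a (1−z)^{b−1} a^{b−1} / Γ(b). -/

import Mathlib

/-! The numerator is at most `z ^ a (1 - z) ^ (b - 1) / a`, because `(1 - t) ^ (b - 1)` increases
in `t` when `b ≤ 1`; the complete beta function is at least `Γ(b) a ^ (-b)` by Wendel's
inequality `Γ(a + b) ≤ a ^ b Γ(a)`, which is log-convexity of `Γ` between `a` and `a + 1`. -/

open MeasureTheory ProbabilityTheory Real
open scoped RealInnerProductSpace ENNReal NNReal

/-- The regularized incomplete beta function I_z(a,b). -/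
noncomputable def regIncBeta (z a b : ℝ) : ℝ :=
  (∫ t in Set.Ioo 0 z, t ^ (a-1) * (1-t) ^ (b-1)) /
    (Real.Gamma a * Real.Gamma b / Real.Gamma (a+b))

theorem Gamma_add_le_rpow_mul_Gamma {a b : ℝ} (ha : 0 < a) (hb0 : 0 < b) (hb1 : b < 1) :
    Gamma (a + b) ≤ a ^ b * Gamma a := by
  have hΓa : 0 < Gamma a := Gamma_pos_of_pos ha
  have hconv := Gamma_mul_add_mul_le_rpow_Gamma_mul_rpow_Gamma (s := a) (t := a + 1)
    ha (by linarith) (sub_pos.2 hb1) hb0 (sub_add_cancel 1 b)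
  calc Gamma (a + b) = Gamma ((1 - b) * a + b * (a + 1)) := by ring_nf
    _ ≤ Gamma a ^ (1 - b) * Gamma (a + 1) ^ b := hconv
    _ = a ^ b * Gamma a := by
      rw [Gamma_add_one ha.ne', mul_rpow ha.le hΓa.le, mul_left_comm, ← rpow_add hΓa,
        sub_add_cancel, rpow_one]

theorem Gamma_div_rpow_le_beta {a b : ℝ} (ha : 0 < a) (hb0 : 0 < b) (hb1 : b < 1) :
    Gamma b / a ^ b ≤ Gamma a * Gamma b / Gamma (a + b) := by
  have hΓa : 0 < Gamma a := Gamma_pos_of_pos ha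
  calc Gamma b / a ^ b = Gamma a * Gamma b / (a ^ b * Gamma a) := by
        field_simp
    _ ≤ Gamma a * Gamma b / Gamma (a + b) :=
      div_le_div_of_nonneg_left (by positivity [Gamma_pos_of_pos hb0])
        (Gamma_pos_of_pos (by linarith)) (Gamma_add_le_rpow_mul_Gamma ha hb0 hb1)

theorem setIntegral_Ioo_rpow_sub_one {a z : ℝ} (ha : 0 < a) (hz : 0 ≤ z) :
    ∫ t in Set.Ioo 0 z, t ^ (a - 1) = z ^ a / a := by
  rw [← integral_Ioc_eq_integral_Ioo, ← intervalIntegral.integral_of_le hz,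
    integral_rpow (Or.inl (by linarith)), sub_add_cancel, zero_rpow ha.ne', sub_zero]

theorem setIntegral_rpow_mul_one_sub_rpow_le {a b z : ℝ} (ha : 0 < a) (hb : b ≤ 1)
    (hz0 : 0 ≤ z) (hz1 : z < 1) :
    ∫ t in Set.Ioo 0 z, t ^ (a - 1) * (1 - t) ^ (b - 1) ≤ z ^ a * (1 - z) ^ (b - 1) / a := by
  have hdom : IntegrableOn (fun t : ℝ => t ^ (a - 1) * (1 - z) ^ (b - 1)) (Set.Ioo 0 z) :=
    ((intervalIntegral.intervalIntegrable_rpow' (by linarith)).1.mono_set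
      Set.Ioo_subset_Ioc_self).mul_const _
  calc ∫ t in Set.Ioo 0 z, t ^ (a - 1) * (1 - t) ^ (b - 1)
      ≤ ∫ t in Set.Ioo 0 z, t ^ (a - 1) * (1 - z) ^ (b - 1) := by
        refine integral_mono_of_nonneg ?_ hdom ?_ <;>
          filter_upwards [ae_restrict_mem measurableSet_Ioo] with t ht
        · exact mul_nonneg (rpow_nonneg ht.1.le _) (rpow_nonneg (by linarith [ht.2]) _)
        · exact mul_le_mul_of_nonneg_left
            (rpow_le_rpow_of_nonpos (by linarith) (by linarith [ht.2]) (by linarith))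
            (rpow_nonneg ht.1.le _)
    _ = z ^ a * (1 - z) ^ (b - 1) / a := by
      rw [integral_mul_const, setIntegral_Ioo_rpow_sub_one ha hz0, div_mul_eq_mul_div]

theorem stmt_10 (a b z : ℝ) (ha : 0 < a) (hb0 : 0 < b) (hb1 : b < 1)
    (hz0 : 0 < z) (hz1 : z < 1) :
    regIncBeta z a b ≤ z ^ a * (1-z) ^ (b-1) * a ^ (b-1) / Real.Gamma b := by
  have hΓb : 0 < Gamma b := Gamma_pos_of_pos hb0
  calc regIncBeta z a b ≤ (z ^ a * (1 - z) ^ (b - 1) / a) / (Gamma b / a ^ b) :=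
        div_le_div₀ (by positivity [sub_pos.2 hz1])
          (setIntegral_rpow_mul_one_sub_rpow_le ha hb1.le hz0.le hz1)
          (by positivity) (Gamma_div_rpow_le_beta ha hb0 hb1)
    _ = z ^ a * (1 - z) ^ (b - 1) * a ^ (b - 1) / Gamma b := by
      rw [rpow_sub ha, rpow_one]
      field_simp
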